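/- Let γ₁, …, γₙ be Hermitian d×d complex matrices with γ_i² = I and γ_i γ_j = −γ_j γ_i for i ≠ j. Index a register of qubits by the 4-element subsets S of {1,…,n}, and let Z_S denote Pauli Z acting on qubit S (tensored with identity on all other qubits). For each 4-element subset S = {j₁ < j₂ < j₃ < j₄}, define O_S := Z_S ⊗ (γ_{j₁} γ_{j₂} γ_{j₃} γ_{j₄}) acting on the tensor product of the qubit register with ℂ^d. Then each O_S is Hermitian, O_S² = I, and for any two 4-element subsets S ≠ T: O_S O_T = (−1)^{|S∩T|} O_T O_S, i.e. O_S and O_T anticommute if S and T agree on an odd number of indices and commute if they agree on an even number of indices. -/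

import Mathlib

open scoped BigOperators

/-- Pauli Z matrix. -/
def pauliZ : Matrix (Fin 2) (Fin 2) ℂ := !![1, 0; 0, -1]

/-- Given Majorana matrices `γ₁,…,γₙ`, a register of qubits indexed by the 4-element
subsets `S` of `{1,…,n}`, and a 4-element subset `S = {j₁ < j₂ < j₃ < j₄}`, the operator
`O_S := Z_S ⊗ (γ_{j₁} γ_{j₂} γ_{j₃} γ_{j₄})` acting on the tensor product of the qubit
register with `ℂ^d`.  Here the qubit register `(ℂ²)^{⊗ register}` is realized as functions
from register sites to `Fin 2`, `Z_S` has `(f, g)` entry the product over sites `T` of the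
entries of `Z` (at site `S`) or the identity (elsewhere), and `⊗` is the Kronecker
product. -/
noncomputable def sykOp {n d : ℕ} (γ : Fin n → Matrix (Fin d) (Fin d) ℂ)
    (S : {S : Finset (Fin n) // S.card = 4}) :
    Matrix (({S : Finset (Fin n) // S.card = 4} → Fin 2) × Fin d)
           (({S : Finset (Fin n) // S.card = 4} → Fin 2) × Fin d) ℂ :=
  Matrix.kroneckerMap (· * ·)
    (Matrix.of fun f g => ∏ T, (if T = S then pauliZ else 1) (f T) (g T))
    (((S.1.sort (· ≤ ·)).map γ).prod)

/-!
Moving `γ i` across a product of `k` Majorana matrices costs the sign `(-1)^k`, except that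
`γ i` commutes with itself; hence two ordered monomials over `s` and `t` commute up to
`(-1)^(#s * #t + #(s ∩ t))`, which for `#s = #t = 4` is `(-1)^#(s ∩ t)`. Reversing a product of
`k` distinct Majoranas costs `(-1)^(k choose 2)`, which is `1` for `k = 4`: since `star`
reverses products and `γ i * γ i = 1` cancels a product against its reverse, a degree-4
monomial is self-adjoint and squares to `1`. The `Z_S` factor is diagonal with entries `±1`.
-/

open Finset

theorem Finset.sum_map_count_sort {ι : Type*} [LinearOrder ι] (s t : Finset ι) :
    ((s.sort (· ≤ ·)).map (t.sort (· ≤ ·)).count).sum = #(s ∩ t) := by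
  rw [← List.sum_toFinset _ (s.sort_nodup _), sort_toFinset, ← filter_mem_eq_inter,
    card_filter]
  refine sum_congr rfl fun i _ => ?_
  rw [← Multiset.coe_count, sort_eq, Multiset.count_eq_of_nodup t.nodup]
  rfl

namespace Majorana

variable {ι R : Type*} [Ring R] {γ : ι → R}

theorem prod_map_mul_prod_map_reverse (hsq : ∀ i, γ i * γ i = 1) :
    ∀ l : List ι, (l.map γ).prod * (l.reverse.map γ).prod = 1
  | [] => by simp
  | x :: t => by
    simp only [List.map_cons, List.prod_cons, List.reverse_cons, List.map_append,
      List.prod_append, List.map_nil, List.prod_nil, mul_one]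
    rw [mul_assoc, ← mul_assoc (t.map γ).prod, prod_map_mul_prod_map_reverse hsq t, one_mul,
      hsq]

theorem star_prod_map [StarRing R] (hγ : ∀ i, IsSelfAdjoint (γ i)) :
    ∀ l : List ι, star (l.map γ).prod = (l.reverse.map γ).prod
  | [] => by simp
  | x :: t => by
    simp only [List.map_cons, List.prod_cons, star_mul, star_prod_map hγ t, (hγ x).star_eq,
      List.reverse_cons, List.map_append, List.prod_append, List.map_nil, List.prod_nil, mul_one]

section List

variable [DecidableEq ι]

theorem mul_prod_map (hanti : ∀ i j, i ≠ j → γ i * γ j = -(γ j * γ i)) (i : ι) :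
    ∀ l : List ι, γ i * (l.map γ).prod
      = (-1 : ℤ) ^ (l.length + l.count i) • ((l.map γ).prod * γ i)
  | [] => by simp
  | x :: t => by
    have ih := mul_prod_map hanti i t
    simp only [List.map_cons, List.prod_cons, List.length_cons, List.count_cons]
    rcases eq_or_ne x i with rfl | hx
    · rw [mul_assoc, ih, mul_smul_comm, ← mul_assoc, beq_self_eq_true, if_pos rfl]
      simp [pow_add]
    · rw [← mul_assoc, hanti i x hx.symm, neg_mul, mul_assoc, ih, mul_smul_comm, ← mul_assoc,
        beq_false_of_ne hx]
      simp [pow_add]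

theorem prod_map_mul_prod_map (hanti : ∀ i j, i ≠ j → γ i * γ j = -(γ j * γ i))
    (l₂ : List ι) : ∀ l₁ : List ι, (l₁.map γ).prod * (l₂.map γ).prod
      = (-1 : ℤ) ^ (l₁.length * l₂.length + (l₁.map l₂.count).sum)
          • ((l₂.map γ).prod * (l₁.map γ).prod)
  | [] => by simp
  | x :: t => by
    simp only [List.map_cons, List.prod_cons, List.length_cons, List.sum_cons]
    rw [mul_assoc, prod_map_mul_prod_map hanti l₂ t, mul_smul_comm, ← mul_assoc,
      mul_prod_map hanti, smul_mul_assoc, smul_smul, ← pow_add, mul_assoc]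
    congr 2
    ring

theorem prod_map_reverse (hanti : ∀ i j, i ≠ j → γ i * γ j = -(γ j * γ i))
    {l : List ι} (hl : l.Nodup) :
    (l.reverse.map γ).prod = (-1 : ℤ) ^ l.length.choose 2 • (l.map γ).prod := by
  induction l using List.reverseRecOn with
  | nil => simp
  | append_singleton l x ih =>
    obtain ⟨hl, -, hx⟩ := List.nodup_append.mp hl
    have hcount : l.count x = 0 :=
      List.count_eq_zero.mpr fun h => hx x h x (List.mem_singleton_self x) rfl
    simp only [List.reverse_append, List.reverse_singleton, List.singleton_append,
      List.map_cons, List.prod_cons, List.map_append, List.prod_append, List.map_nil,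
      List.prod_nil, mul_one, List.length_append, List.length_singleton]
    rw [ih hl, mul_smul_comm, mul_prod_map hanti, hcount, add_zero, smul_smul, ← pow_add,
      Nat.choose_succ_succ, Nat.choose_one_right, add_comm l.length]

end List

section Finset

variable [LinearOrder ι]

def monomial (γ : ι → R) (s : Finset ι) : R :=
  ((s.sort (· ≤ ·)).map γ).prod

theorem monomial_mul_monomial (hanti : ∀ i j, i ≠ j → γ i * γ j = -(γ j * γ i))
    (s t : Finset ι) :
    monomial γ s * monomial γ t
      = (-1 : ℤ) ^ (#s * #t + #(s ∩ t)) • (monomial γ t * monomial γ s) := by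
  rw [monomial, monomial, prod_map_mul_prod_map hanti, length_sort, length_sort,
    sum_map_count_sort]

theorem monomial_sort_reverse (hanti : ∀ i j, i ≠ j → γ i * γ j = -(γ j * γ i))
    {s : Finset ι} (hs : Even ((#s).choose 2)) :
    (((s.sort (· ≤ ·)).reverse).map γ).prod = monomial γ s := by
  rw [prod_map_reverse hanti (s.sort_nodup _), length_sort, hs.neg_one_pow, one_smul, monomial]

theorem monomial_mul_self (hsq : ∀ i, γ i * γ i = 1)
    (hanti : ∀ i j, i ≠ j → γ i * γ j = -(γ j * γ i))
    {s : Finset ι} (hs : Even ((#s).choose 2)) : monomial γ s * monomial γ s = 1 := by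
  nth_rw 2 [← monomial_sort_reverse hanti hs]
  exact prod_map_mul_prod_map_reverse hsq _

theorem isSelfAdjoint_monomial [StarRing R] (hγ : ∀ i, IsSelfAdjoint (γ i))
    (hanti : ∀ i j, i ≠ j → γ i * γ j = -(γ j * γ i))
    {s : Finset ι} (hs : Even ((#s).choose 2)) : IsSelfAdjoint (monomial γ s) := by
  rw [IsSelfAdjoint, monomial, star_prod_map hγ, monomial_sort_reverse hanti hs, monomial]

end Finset

end Majorana

open Matrix
open scoped Kronecker

theorem Matrix.IsHermitian.kronecker {α l m : Type*} [CommMagma α] [StarMul α]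
    {A : Matrix l l α} {B : Matrix m m α} (hA : A.IsHermitian) (hB : B.IsHermitian) :
    (A ⊗ₖ B).IsHermitian := by
  rw [IsHermitian, conjTranspose_kronecker, hA.eq, hB.eq]

theorem isSelfAdjoint_pauliZ_apply_self (a : Fin 2) : IsSelfAdjoint (pauliZ a a) := by
  fin_cases a <;> simp [pauliZ, IsSelfAdjoint]

theorem pauliZ_apply_self_mul_self (a : Fin 2) : pauliZ a a * pauliZ a a = 1 := by
  fin_cases a <;> simp [pauliZ]

theorem pauliZ_apply_of_ne {a b : Fin 2} (h : a ≠ b) : pauliZ a b = 0 := by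
  fin_cases a <;> fin_cases b <;> simp_all [pauliZ]

theorem of_prod_ite_pauliZ {σ : Type*} [Fintype σ] [DecidableEq σ] (S : σ) :
    (of fun f g : σ → Fin 2 => ∏ T, (if T = S then pauliZ else 1) (f T) (g T))
      = diagonal fun f => pauliZ (f S) (f S) := by
  ext f g
  rcases eq_or_ne f g with rfl | hfg
  · rw [of_apply, diagonal_apply_eq, prod_eq_single S]
    · rw [if_pos rfl]
    · intro T _ hT
      rw [if_neg hT, one_apply_eq]
    · simp
  · rw [of_apply, diagonal_apply_ne _ hfg]
    obtain ⟨T, hT⟩ := Function.ne_iff.mp hfg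
    refine prod_eq_zero (mem_univ T) ?_
    split_ifs
    · exact pauliZ_apply_of_ne hT
    · exact one_apply_ne hT

theorem stmt11 {n d : ℕ} (γ : Fin n → Matrix (Fin d) (Fin d) ℂ)
    (hHerm : ∀ i, (γ i).IsHermitian) (hsq : ∀ i, γ i * γ i = 1)
    (hanti : ∀ i j, i ≠ j → γ i * γ j = -(γ j * γ i)) :
    (∀ S, (sykOp γ S).IsHermitian) ∧
    (∀ S, sykOp γ S * sykOp γ S = 1) ∧
    (∀ S T, S ≠ T →
      sykOp γ S * sykOp γ T
        = ((-1 : ℂ) ^ (S.1 ∩ T.1).card) • (sykOp γ T * sykOp γ S)) := by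
  have hop : ∀ S,
      sykOp γ S = diagonal (fun f => pauliZ (f S) (f S)) ⊗ₖ Majorana.monomial γ S.1 :=
    fun S => by rw [sykOp, of_prod_ite_pauliZ]; rfl
  have heven : ∀ S : {S : Finset (Fin n) // S.card = 4}, Even (S.1.card.choose 2) :=
    fun S => by rw [S.2]; decide
  refine ⟨fun S => ?_, fun S => ?_, fun S T _ => ?_⟩
  · rw [hop]
    exact (isHermitian_diagonal_iff.mpr fun f => isSelfAdjoint_pauliZ_apply_self _).kronecker
      (Majorana.isSelfAdjoint_monomial hHerm hanti (heven S))
  · rw [hop, ← mul_kronecker_mul, diagonal_mul_diagonal,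
      Majorana.monomial_mul_self hsq hanti (heven S)]
    simp only [pauliZ_apply_self_mul_self, diagonal_one, one_kronecker_one]
  · rw [hop, hop, ← mul_kronecker_mul, ← mul_kronecker_mul, (commute_diagonal _ _).eq,
      Majorana.monomial_mul_monomial hanti, S.2, T.2, kronecker_smul,
      ← Int.cast_smul_eq_zsmul ℂ]
    norm_num [pow_add]
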